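/- For any connected graph G of order n ≥ 2, η_p(G) ≤ η(G) + 1, where η(G) is the resolving domination number (minimum size of a set that is both resolving and dominating). -/
import Mathlib


open SimpleGraph Set

/-- Distance from a vertex to a set of vertices. -/
noncomputable def pDist {V : Type*} (G : SimpleGraph V) (v : V) (S : Set V) : ℕ :=
  sInf (G.dist v '' S)

/-- A family of sets of vertices is resolving if every pair of distinct vertices
is distinguished by its distance to some part. -/
def IsResolvingFam {V : Type*} (G : SimpleGraph V) (P : Set (Set V)) : Prop :=
  ∀ u v : V, u ≠ v → ∃ S ∈ P, pDist G u S ≠ pDist G v S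

/-- A family of sets is dominating if every vertex is at distance exactly 1 from some part. -/
def IsDominatingFam {V : Type*} (G : SimpleGraph V) (P : Set (Set V)) : Prop :=
  ∀ v : V, ∃ S ∈ P, pDist G v S = 1

/-- The partition domination number: minimum cardinality of a dominating partition. -/
noncomputable def gammaP {V : Type*} (G : SimpleGraph V) : ℕ :=
  sInf {k | ∃ P : Set (Set V), Setoid.IsPartition P ∧ IsDominatingFam G P ∧ P.ncard = k}

/-- The partition dimension: minimum cardinality of a resolving partition. -/
noncomputable def betaP {V : Type*} (G : SimpleGraph V) : ℕ :=
  sInf {k | ∃ P : Set (Set V), Setoid.IsPartition P ∧ IsResolvingFam G P ∧ P.ncard = k}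

/-- The dominating partition dimension: minimum cardinality of a resolving dominating partition. -/
noncomputable def etaP {V : Type*} (G : SimpleGraph V) : ℕ :=
  sInf {k | ∃ P : Set (Set V), Setoid.IsPartition P ∧ IsResolvingFam G P ∧
    IsDominatingFam G P ∧ P.ncard = k}

/-- A resolving set of vertices. -/
def IsResolvingSet {V : Type*} (G : SimpleGraph V) (S : Set V) : Prop :=
  ∀ u v : V, u ≠ v → ∃ x ∈ S, G.dist u x ≠ G.dist v x

/-- A dominating set of vertices. -/
def IsDominatingSet {V : Type*} (G : SimpleGraph V) (S : Set V) : Prop :=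
  ∀ v : V, v ∉ S → ∃ u ∈ S, G.Adj u v

/-- The resolving domination number η(G). -/
noncomputable def etaNum {V : Type*} (G : SimpleGraph V) : ℕ :=
  sInf {k | ∃ S : Set V, IsResolvingSet G S ∧ IsDominatingSet G S ∧ S.ncard = k}

/-- A twin set: pairwise twin vertices. -/
def IsTwinSet {V : Type*} (G : SimpleGraph V) (W : Set V) : Prop :=
  ∀ u ∈ W, ∀ v ∈ W, ∀ w : V, w ≠ u → w ≠ v → G.dist u w = G.dist v w

/-- The join of two graphs. -/
def gJoin {α β : Type*} (G : SimpleGraph α) (H : SimpleGraph β) : SimpleGraph (α ⊕ β) :=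
  SimpleGraph.fromRel (fun x y =>
    (∃ a b, x = Sum.inl a ∧ y = Sum.inl b ∧ G.Adj a b) ∨
    (∃ a b, x = Sum.inr a ∧ y = Sum.inr b ∧ H.Adj a b) ∨
    (∃ a b, x = Sum.inl a ∧ y = Sum.inr b))

/-- The disjoint union of two graphs. -/
def gUnion {α β : Type*} (G : SimpleGraph α) (H : SimpleGraph β) : SimpleGraph (α ⊕ β) :=
  SimpleGraph.fromRel (fun x y =>
    (∃ a b, x = Sum.inl a ∧ y = Sum.inl b ∧ G.Adj a b) ∨
    (∃ a b, x = Sum.inr a ∧ y = Sum.inr b ∧ H.Adj a b))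

lemma pDist_singleton {V : Type*} (G : SimpleGraph V) (v x : V) :
    pDist G v {x} = G.dist v x := by
  simp [pDist]

theorem stmt_4 {V : Type*} [Fintype V] (G : SimpleGraph V) (hG : G.Connected)
    (hn : 2 ≤ Fintype.card V) : etaP G ≤ etaNum G + 1 := by
  have hVnt : Nontrivial V := Fintype.one_lt_card_iff_nontrivial.mp hn
  -- the etaNum defining set is nonempty: V is resolving and dominating
  have hne : {k | ∃ S : Set V, IsResolvingSet G S ∧ IsDominatingSet G S ∧ S.ncard = k}.Nonempty := by
    refine ⟨(Set.univ : Set V).ncard, Set.univ, ?_, ?_, rfl⟩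
    · intro u v huv
      exact ⟨u, trivial, by
        rw [G.dist_self]
        exact fun h => huv (((hG.dist_eq_zero_iff).mp h.symm).symm)⟩
    · intro v hv; exact absurd trivial hv
  obtain ⟨S, hSres, hSdom, hScard⟩ := Nat.sInf_mem hne
  -- every vertex has a neighbor
  have hadj : ∀ v : V, ∃ w, G.Adj v w := by
    intro v
    obtain ⟨u, hu⟩ := exists_ne v
    obtain ⟨p⟩ := hG.preconnected v u
    cases p with
    | nil => exact absurd rfl hu.symm
    | cons h _ => exact ⟨_, h⟩
  -- the partition
  set P : Set (Set V) := ((fun s => ({s} : Set V)) '' S) ∪ {T | T = Sᶜ ∧ (Sᶜ : Set V).Nonempty}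
    with hP
  have hSmem : ∀ s ∈ S, ({s} : Set V) ∈ P := fun s hs => Or.inl ⟨s, hs, rfl⟩
  have hpart : Setoid.IsPartition P := by
    constructor
    · rintro (⟨s, _, hs⟩ | ⟨h1, h2⟩)
      · exact (Set.singleton_nonempty s).ne_empty hs
      · exact h2.ne_empty h1.symm
    · intro a
      by_cases ha : a ∈ S
      · refine ⟨{a}, ⟨hSmem a ha, rfl⟩, ?_⟩
        rintro T ⟨(⟨s, _, rfl⟩ | ⟨rfl, _⟩), haT⟩
        · simp_all
        · exact absurd ha haT
      · refine ⟨Sᶜ, ⟨Or.inr ⟨rfl, a, ha⟩, ha⟩, ?_⟩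
        rintro T ⟨(⟨s, hs, rfl⟩ | ⟨rfl, _⟩), haT⟩
        · exact absurd (haT ▸ hs) ha
        · rfl
  have hres : IsResolvingFam G P := by
    intro u v huv
    obtain ⟨x, hx, hdx⟩ := hSres u v huv
    exact ⟨{x}, hSmem x hx, by rwa [pDist_singleton, pDist_singleton]⟩
  have hdom : IsDominatingFam G P := by
    intro v
    by_cases hv : v ∈ S
    · obtain ⟨w, hw⟩ := hadj v
      by_cases hwS : w ∈ S
      · exact ⟨{w}, hSmem w hwS, by rw [pDist_singleton, dist_eq_one_iff_adj]; exact hw⟩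
      · refine ⟨Sᶜ, Or.inr ⟨rfl, w, hwS⟩, ?_⟩
        have h1 : (1 : ℕ) ∈ G.dist v '' Sᶜ :=
          ⟨w, hwS, dist_eq_one_iff_adj.mpr hw⟩
        have h0 : (0 : ℕ) ∉ G.dist v '' Sᶜ := by
          rintro ⟨y, hy, hy0⟩
          exact hy ((hG.dist_eq_zero_iff.mp hy0) ▸ hv)
        have hle : pDist G v Sᶜ ≤ 1 := Nat.sInf_le h1
        have hne0 : pDist G v Sᶜ ≠ 0 := fun h => h0 (h ▸ Nat.sInf_mem ⟨1, h1⟩)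
        omega
    · obtain ⟨u, hu, huadj⟩ := hSdom v hv
      exact ⟨{u}, hSmem u hu,
        by rw [pDist_singleton, dist_eq_one_iff_adj]; exact huadj.symm⟩
  have hcard : P.ncard ≤ S.ncard + 1 := by
    calc P.ncard ≤ ((fun s => ({s} : Set V)) '' S).ncard
          + ({T | T = Sᶜ ∧ (Sᶜ : Set V).Nonempty} : Set (Set V)).ncard :=
        Set.ncard_union_le _ _
      _ ≤ S.ncard + 1 := by
        gcongr
        · exact Set.ncard_image_le (Set.toFinite S)
        · have : ({T | T = Sᶜ ∧ (Sᶜ : Set V).Nonempty} : Set (Set V)) ⊆ {Sᶜ} := by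
            rintro T ⟨rfl, _⟩; rfl
          simpa using Set.ncard_le_ncard this (Set.finite_singleton _)
  have : P.ncard ∈ {k | ∃ P : Set (Set V), Setoid.IsPartition P ∧ IsResolvingFam G P ∧
      IsDominatingFam G P ∧ P.ncard = k} := ⟨P, hpart, hres, hdom, rfl⟩
  calc etaP G ≤ P.ncard := Nat.sInf_le this
    _ ≤ S.ncard + 1 := hcard
    _ = etaNum G + 1 := by rw [hScard]; rfl
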